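/- Let u and v be nonadjacent vertices of a graph G and let G_{u,v,1} be obtained by adding a new vertex x adjacent exactly to u and v. Then γ(G) − 1 ≤ γ(G_{u,v,1}) ≤ γ(G) + 1, and γ(G_{u,v,1}) = γ(G) − 1 if and only if γ(G − {u,v}) = γ(G) − 2. -/
import Mathlib
set_option linter.unusedSectionVars false

/-- `D` is a dominating set of `G`: every vertex not in `D` has a neighbor in `D`. -/
def isDomSet {V : Type*} (G : SimpleGraph V) (D : Finset V) : Prop :=
  ∀ v, v ∉ D → ∃ u ∈ D, G.Adj u v

/-- The domination number: minimum cardinality of a dominating set. -/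
noncomputable def domNum {V : Type*} (G : SimpleGraph V) : ℕ :=
  sInf {n | ∃ D : Finset V, D.card = n ∧ isDomSet G D}

/-- The `(u,v)`-path-addition graph `G_{u,v,k}`: add an internally disjoint path with
`k` internal vertices between `u` and `v`. -/
noncomputable def pathAdd {V : Type*} (G : SimpleGraph V) (u v : V) (k : ℕ) :
    SimpleGraph (V ⊕ Fin k) :=
  SimpleGraph.fromRel (fun a b =>
    match a, b with
    | Sum.inl x, Sum.inl y => G.Adj x y
    | Sum.inl x, Sum.inr i => (x = u ∧ (i : ℕ) = 0) ∨ (x = v ∧ (i : ℕ) = k - 1)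
    | Sum.inr _, Sum.inl _ => False
    | Sum.inr i, Sum.inr j => (j : ℕ) = (i : ℕ) + 1)

section Helpers

variable {V : Type*}

lemma isDomSet_univ [Fintype V] (G : SimpleGraph V) : isDomSet G Finset.univ :=
  fun w hw => absurd (Finset.mem_univ w) hw

lemma domNum_le {G : SimpleGraph V} {D : Finset V} (hD : isDomSet G D) :
    domNum G ≤ D.card := Nat.sInf_le ⟨D, rfl, hD⟩

lemma exists_minDom [Fintype V] (G : SimpleGraph V) :
    ∃ D : Finset V, D.card = domNum G ∧ isDomSet G D := by
  have hne : {n | ∃ D : Finset V, D.card = n ∧ isDomSet G D}.Nonempty :=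
    ⟨Finset.univ.card, Finset.univ, rfl, isDomSet_univ G⟩
  exact Nat.sInf_mem hne

lemma domNum_pos [Fintype V] [Nonempty V] (G : SimpleGraph V) : 1 ≤ domNum G := by
  obtain ⟨D, hc, hD⟩ := exists_minDom G
  rcases Nat.eq_zero_or_pos (domNum G) with h0 | hp
  · exfalso
    rw [h0, Finset.card_eq_zero] at hc
    subst hc
    obtain ⟨w⟩ := ‹Nonempty V›
    obtain ⟨y, hy, -⟩ := hD w (Finset.notMem_empty w)
    exact Finset.notMem_empty y hy
  · exact hp

variable (G : SimpleGraph V) (u v : V)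

lemma adj_ll {a b : V} : (pathAdd G u v 1).Adj (.inl a) (.inl b) ↔ G.Adj a b := by
  rw [pathAdd, SimpleGraph.fromRel_adj]
  constructor
  · rintro ⟨-, h | h⟩
    · exact h
    · exact h.symm
  · intro hab
    exact ⟨fun hc => G.irrefl (Sum.inl_injective hc ▸ hab), Or.inl hab⟩

lemma adj_lr {a : V} {i : Fin 1} :
    (pathAdd G u v 1).Adj (.inl a) (.inr i) ↔ a = u ∨ a = v := by
  rw [pathAdd, SimpleGraph.fromRel_adj]
  have hi : (i : ℕ) = 0 := by omega
  constructor
  · rintro ⟨-, (⟨h, -⟩ | ⟨h, -⟩) | hf⟩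
    · exact Or.inl h
    · exact Or.inr h
    · exact absurd hf (by simp)
  · rintro (rfl | rfl)
    · exact ⟨Sum.inl_ne_inr, Or.inl (Or.inl ⟨rfl, hi⟩)⟩
    · exact ⟨Sum.inl_ne_inr, Or.inl (Or.inr ⟨rfl, hi⟩)⟩

lemma adj_rl {a : V} {i : Fin 1} :
    (pathAdd G u v 1).Adj (.inr i) (.inl a) ↔ a = u ∨ a = v := by
  rw [SimpleGraph.adj_comm]; exact adj_lr G u v

lemma adj_rr {i j : Fin 1} : ¬ (pathAdd G u v 1).Adj (.inr i) (.inr j) := by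
  have : i = j := Subsingleton.elim _ _
  subst this
  exact (pathAdd G u v 1).irrefl

end Helpers

section Main

variable {V : Type*} [Fintype V] (G : SimpleGraph V) (u v : V)

/-- Projection of a finset of `V ⊕ Fin 1` to `V`. -/
noncomputable def projL (D : Finset (V ⊕ Fin 1)) : Finset V :=
  D.preimage Sum.inl Sum.inl_injective.injOn

omit [Fintype V] in
lemma mem_projL {D : Finset (V ⊕ Fin 1)} {w : V} : w ∈ projL D ↔ Sum.inl w ∈ D :=
  Finset.mem_preimage

lemma card_projL_le (D : Finset (V ⊕ Fin 1)) : (projL D).card ≤ D.card :=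
  Finset.card_le_card_of_injOn Sum.inl (fun _ ha => mem_projL.mp ha) Sum.inl_injective.injOn

/-- γ(G) ≤ γ(G') + 1 -/
lemma lemOne : domNum G ≤ domNum (pathAdd G u v 1) + 1 := by
  classical
  obtain ⟨D', hc, hD⟩ := exists_minDom (pathAdd G u v 1)
  set x : V ⊕ Fin 1 := Sum.inr 0 with hxdef
  by_cases hx : x ∈ D'
  · set P := projL (D'.erase x) with hP
    have hdom : isDomSet G (P ∪ {u, v}) := by
      intro w hw
      simp only [Finset.mem_union, Finset.mem_insert, Finset.mem_singleton, not_or] at hw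
      obtain ⟨hwP, hwu, hwv⟩ := hw
      have hwD : Sum.inl w ∉ D' := by
        intro hin
        exact hwP (mem_projL.mpr (Finset.mem_erase.mpr ⟨by simp [hxdef], hin⟩))
      obtain ⟨d, hd, hadj⟩ := hD (Sum.inl w) hwD
      match d with
      | Sum.inl y =>
        refine ⟨y, ?_, (adj_ll G u v).mp hadj⟩
        exact Finset.mem_union_left _ (mem_projL.mpr (Finset.mem_erase.mpr ⟨by simp, hd⟩))
      | Sum.inr i =>
        rcases (adj_rl G u v).mp hadj with rfl | rfl
        · exact absurd rfl hwu
        · exact absurd rfl hwv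
    have hcard : (P ∪ ({u, v} : Finset V)).card ≤ D'.card + 1 := by
      have h1 : P.card ≤ D'.card - 1 := by
        have := card_projL_le (D'.erase x)
        rwa [Finset.card_erase_of_mem hx] at this
      have h2 : ({u, v} : Finset V).card ≤ 2 := Finset.card_insert_le _ _ |>.trans (by simp)
      have h3 := Finset.card_union_le P ({u, v} : Finset V)
      have h4 : 1 ≤ D'.card := Finset.card_pos.mpr ⟨x, hx⟩
      omega
    calc domNum G ≤ (P ∪ ({u, v} : Finset V)).card := domNum_le hdom
      _ ≤ D'.card + 1 := hcard
      _ = domNum (pathAdd G u v 1) + 1 := by rw [hc]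
  · have hdom : isDomSet G (projL D') := by
      intro w hw
      have hwD : Sum.inl w ∉ D' := fun hin => hw (mem_projL.mpr hin)
      obtain ⟨d, hd, hadj⟩ := hD (Sum.inl w) hwD
      match d with
      | Sum.inl y => exact ⟨y, mem_projL.mpr hd, (adj_ll G u v).mp hadj⟩
      | Sum.inr i =>
        exact absurd hd (by rw [show Sum.inr i = x from by simp [hxdef, Subsingleton.elim i 0]]; exact hx)
    calc domNum G ≤ (projL D').card := domNum_le hdom
      _ ≤ D'.card := card_projL_le D'
      _ ≤ domNum (pathAdd G u v 1) + 1 := by omega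

/-- γ(G') ≤ γ(G) + 1 -/
lemma lemTwo : domNum (pathAdd G u v 1) ≤ domNum G + 1 := by
  classical
  obtain ⟨D, hc, hD⟩ := exists_minDom G
  set x : V ⊕ Fin 1 := Sum.inr 0 with hxdef
  set D' : Finset (V ⊕ Fin 1) := D.image Sum.inl ∪ {x} with hD'
  have hdom : isDomSet (pathAdd G u v 1) D' := by
    intro b hb
    match b with
    | Sum.inl w =>
      have hwD : w ∉ D := by
        intro hin
        exact hb (Finset.mem_union_left _ (Finset.mem_image_of_mem _ hin))
      obtain ⟨y, hy, hadj⟩ := hD w hwD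
      exact ⟨Sum.inl y, Finset.mem_union_left _ (Finset.mem_image_of_mem _ hy),
        (adj_ll G u v).mpr hadj⟩
    | Sum.inr i =>
      exfalso
      apply hb
      rw [show Sum.inr i = x from by simp [hxdef, Subsingleton.elim i 0]]
      exact Finset.mem_union_right _ (Finset.mem_singleton_self x)
  have hcard : D'.card ≤ D.card + 1 := by
    rw [hD']
    calc (D.image Sum.inl ∪ {x}).card
        ≤ (D.image Sum.inl).card + ({x} : Finset (V ⊕ Fin 1)).card :=
          Finset.card_union_le _ _
      _ ≤ D.card + 1 := by simpa using Nat.add_le_add_right Finset.card_image_le 1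
  calc domNum (pathAdd G u v 1) ≤ D'.card := domNum_le hdom
    _ ≤ D.card + 1 := hcard
    _ = domNum G + 1 := by rw [hc]

/-- γ(G) ≤ γ(G − {u,v}) + 2 -/
lemma lemThree : domNum G ≤ domNum (G.induce {w | w ≠ u ∧ w ≠ v}) + 2 := by
  classical
  haveI : Fintype ↥{w | w ≠ u ∧ w ≠ v} := Fintype.ofFinite _
  obtain ⟨D'', hc, hD⟩ := exists_minDom (G.induce {w | w ≠ u ∧ w ≠ v})
  set D : Finset V := D''.image Subtype.val ∪ {u, v} with hDdef
  have hdom : isDomSet G D := by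
    intro w hw
    simp only [hDdef, Finset.mem_union, Finset.mem_insert, Finset.mem_singleton, not_or] at hw
    obtain ⟨hwI, hwu, hwv⟩ := hw
    have hwS : (⟨w, hwu, hwv⟩ : ↥{w | w ≠ u ∧ w ≠ v}) ∉ D'' := by
      intro hin
      exact hwI (Finset.mem_image_of_mem _ hin)
    obtain ⟨y, hy, hadj⟩ := hD _ hwS
    exact ⟨y.val, Finset.mem_union_left _ (Finset.mem_image_of_mem _ hy), hadj⟩
  have hcard : D.card ≤ D''.card + 2 := by
    rw [hDdef]
    have h1 := Finset.card_union_le (D''.image Subtype.val) ({u, v} : Finset V)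
    have h2 : (D''.image Subtype.val).card ≤ D''.card := Finset.card_image_le
    have h3 : ({u, v} : Finset V).card ≤ 2 := Finset.card_insert_le _ _ |>.trans (by simp)
    omega
  calc domNum G ≤ D.card := domNum_le hdom
    _ ≤ D''.card + 2 := hcard
    _ = domNum (G.induce {w | w ≠ u ∧ w ≠ v}) + 2 := by rw [hc]

lemma lemForward (heq : domNum (pathAdd G u v 1) = domNum G - 1) :
    domNum (G.induce {w | w ≠ u ∧ w ≠ v}) = domNum G - 2 := by
  classical
  haveI : Fintype ↥{w | w ≠ u ∧ w ≠ v} := Fintype.ofFinite _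
  haveI : Nonempty V := ⟨u⟩
  have hG'pos : 1 ≤ domNum (pathAdd G u v 1) := domNum_pos _
  have hn1 : 1 ≤ domNum G := domNum_pos G
  set n := domNum G with hn
  have hn2 : 2 ≤ n := by omega
  obtain ⟨D', hc, hD⟩ := exists_minDom (pathAdd G u v 1)
  rw [heq] at hc
  set x : V ⊕ Fin 1 := Sum.inr 0 with hxdef
  have hx : x ∈ D' := by
    by_contra hx
    have hdom : isDomSet G (projL D') := by
      intro w hw
      have hwD : Sum.inl w ∉ D' := fun hin => hw (mem_projL.mpr hin)
      obtain ⟨d, hd, hadj⟩ := hD (Sum.inl w) hwD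
      match d with
      | Sum.inl y => exact ⟨y, mem_projL.mpr hd, (adj_ll G u v).mp hadj⟩
      | Sum.inr i =>
        exact absurd hd
          (by rw [show Sum.inr i = x from by simp [hxdef, Subsingleton.elim i 0]]; exact hx)
    have hle := domNum_le hdom
    have hle2 := card_projL_le D'
    omega
  have hu : Sum.inl u ∉ D' := by
    intro huin
    set Dv := projL (D'.erase x) ∪ {v} with hDv
    have hdom : isDomSet G Dv := by
      intro w hw
      simp only [hDv, Finset.mem_union, Finset.mem_singleton, not_or] at hw
      obtain ⟨hwP, hwv⟩ := hw
      have hwu : w ≠ u := by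
        rintro rfl
        exact hwP (mem_projL.mpr (Finset.mem_erase.mpr ⟨by simp [hxdef], huin⟩))
      have hwD : Sum.inl w ∉ D' := fun hin =>
        hwP (mem_projL.mpr (Finset.mem_erase.mpr ⟨by simp [hxdef], hin⟩))
      obtain ⟨d, hd, hadj⟩ := hD (Sum.inl w) hwD
      match d with
      | Sum.inl y =>
        exact ⟨y, Finset.mem_union_left _
          (mem_projL.mpr (Finset.mem_erase.mpr ⟨by simp, hd⟩)), (adj_ll G u v).mp hadj⟩
      | Sum.inr i =>
        rcases (adj_rl G u v).mp hadj with rfl | rfl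
        · exact absurd rfl hwu
        · exact absurd rfl hwv
    have hle := domNum_le hdom
    have hc1 : Dv.card ≤ (n - 1 - 1) + 1 := by
      rw [hDv]
      have h1 := Finset.card_union_le (projL (D'.erase x)) ({v} : Finset V)
      have h2 := card_projL_le (D'.erase x)
      rw [Finset.card_erase_of_mem hx, hc] at h2
      simp only [Finset.card_singleton] at h1
      omega
    omega
  have hv : Sum.inl v ∉ D' := by
    intro hvin
    set Du := projL (D'.erase x) ∪ {u} with hDu
    have hdom : isDomSet G Du := by
      intro w hw
      simp only [hDu, Finset.mem_union, Finset.mem_singleton, not_or] at hw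
      obtain ⟨hwP, hwu⟩ := hw
      have hwv : w ≠ v := by
        rintro rfl
        exact hwP (mem_projL.mpr (Finset.mem_erase.mpr ⟨by simp [hxdef], hvin⟩))
      have hwD : Sum.inl w ∉ D' := fun hin =>
        hwP (mem_projL.mpr (Finset.mem_erase.mpr ⟨by simp [hxdef], hin⟩))
      obtain ⟨d, hd, hadj⟩ := hD (Sum.inl w) hwD
      match d with
      | Sum.inl y =>
        exact ⟨y, Finset.mem_union_left _
          (mem_projL.mpr (Finset.mem_erase.mpr ⟨by simp, hd⟩)), (adj_ll G u v).mp hadj⟩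
      | Sum.inr i =>
        rcases (adj_rl G u v).mp hadj with rfl | rfl
        · exact absurd rfl hwu
        · exact absurd rfl hwv
    have hle := domNum_le hdom
    have hc1 : Du.card ≤ (n - 1 - 1) + 1 := by
      rw [hDu]
      have h1 := Finset.card_union_le (projL (D'.erase x)) ({u} : Finset V)
      have h2 := card_projL_le (D'.erase x)
      rw [Finset.card_erase_of_mem hx, hc] at h2
      simp only [Finset.card_singleton] at h1
      omega
    omega
  set P := projL (D'.erase x) with hPd
  have hPsub : ∀ w ∈ P, w ≠ u ∧ w ≠ v := by
    intro w hw
    have hwD' : Sum.inl w ∈ D' := (Finset.mem_erase.mp (mem_projL.mp hw)).2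
    constructor
    · rintro rfl; exact hu hwD'
    · rintro rfl; exact hv hwD'
  set D'' : Finset ↥{w | w ≠ u ∧ w ≠ v} := P.subtype _ with hD''
  have hdom : isDomSet (G.induce {w | w ≠ u ∧ w ≠ v}) D'' := by
    rintro ⟨w, hwu, hwv⟩ hw
    rw [hD'', Finset.mem_subtype] at hw
    have hwD : Sum.inl w ∉ D' := fun hin =>
      hw (mem_projL.mpr (Finset.mem_erase.mpr ⟨by simp [hxdef], hin⟩))
    obtain ⟨d, hd, hadj⟩ := hD (Sum.inl w) hwD
    match d with
    | Sum.inl y =>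
      have hyP : y ∈ P := mem_projL.mpr (Finset.mem_erase.mpr ⟨by simp, hd⟩)
      obtain ⟨hyu, hyv⟩ := hPsub y hyP
      exact ⟨⟨y, hyu, hyv⟩, Finset.mem_subtype.mpr hyP, (adj_ll G u v).mp hadj⟩
    | Sum.inr i =>
      rcases (adj_rl G u v).mp hadj with rfl | rfl
      · exact absurd rfl hwu
      · exact absurd rfl hwv
  have hcard : D''.card ≤ n - 2 := by
    have h1 : D''.card ≤ P.card :=
      Finset.card_le_card_of_injOn Subtype.val (fun a ha => Finset.mem_subtype.mp ha)
        Subtype.val_injective.injOn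
    have h2 : P.card ≤ (D'.erase x).card := card_projL_le _
    rw [Finset.card_erase_of_mem hx, hc] at h2
    omega
  have hle2 := domNum_le hdom
  have hge := lemThree G u v
  omega

lemma lemBackward (hne : u ≠ v) (h : ¬G.Adj u v)
    (heq : domNum (G.induce {w | w ≠ u ∧ w ≠ v}) = domNum G - 2) :
    domNum (pathAdd G u v 1) = domNum G - 1 := by
  classical
  haveI : Fintype ↥{w | w ≠ u ∧ w ≠ v} := Fintype.ofFinite _
  haveI : Nonempty V := ⟨u⟩
  have hn1 : 1 ≤ domNum G := domNum_pos G
  set n := domNum G with hn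
  have hn2 : 2 ≤ n := by
    by_contra hlt
    have hne1 : n = 1 := by omega
    have hind0 : domNum (G.induce {w | w ≠ u ∧ w ≠ v}) = 0 := by rw [heq, hne1]
    obtain ⟨D'', hc, hD⟩ := exists_minDom (G.induce {w | w ≠ u ∧ w ≠ v})
    rw [hind0, Finset.card_eq_zero] at hc
    subst hc
    have hall : ∀ w : V, w = u ∨ w = v := by
      intro w
      by_contra hcon
      push_neg at hcon
      obtain ⟨y, hy, -⟩ := hD ⟨w, hcon.1, hcon.2⟩ (Finset.notMem_empty _)
      exact Finset.notMem_empty y hy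
    obtain ⟨D, hcD, hDd⟩ := exists_minDom G
    rw [← hn, hne1] at hcD
    obtain ⟨a, rfl⟩ := Finset.card_eq_one.mp hcD
    rcases hall a with rfl | rfl
    · obtain ⟨y, hy, hadj⟩ := hDd v (by simp [hne.symm])
      rw [Finset.mem_singleton] at hy
      subst hy
      exact h hadj
    · obtain ⟨y, hy, hadj⟩ := hDd u (by simp [hne])
      rw [Finset.mem_singleton] at hy
      subst hy
      exact h hadj.symm
  obtain ⟨D'', hc, hD⟩ := exists_minDom (G.induce {w | w ≠ u ∧ w ≠ v})
  rw [heq] at hc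
  set D' : Finset (V ⊕ Fin 1) := D''.image (fun a => Sum.inl a.val) ∪ {Sum.inr 0} with hD'
  have hdom : isDomSet (pathAdd G u v 1) D' := by
    intro b hb
    match b with
    | Sum.inl w =>
      by_cases hw : w = u ∨ w = v
      · exact ⟨Sum.inr 0, Finset.mem_union_right _ (Finset.mem_singleton_self _),
          (adj_rl G u v).mpr hw⟩
      · push_neg at hw
        have hwD : (⟨w, hw.1, hw.2⟩ : ↥{w | w ≠ u ∧ w ≠ v}) ∉ D'' := by
          intro hin
          exact hb (Finset.mem_union_left _ (Finset.mem_image_of_mem _ hin))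
        obtain ⟨y, hy, hadj⟩ := hD _ hwD
        exact ⟨Sum.inl y.val, Finset.mem_union_left _ (Finset.mem_image_of_mem _ hy),
          (adj_ll G u v).mpr hadj⟩
    | Sum.inr i =>
      exfalso
      apply hb
      rw [show Sum.inr i = (Sum.inr 0 : V ⊕ Fin 1) from by simp [Subsingleton.elim i 0]]
      exact Finset.mem_union_right _ (Finset.mem_singleton_self _)
  have hcard : D'.card ≤ (n - 2) + 1 := by
    rw [hD']
    calc (D''.image (fun a => Sum.inl a.val) ∪ {Sum.inr 0}).card
        ≤ (D''.image (fun a => Sum.inl a.val)).card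
            + ({Sum.inr 0} : Finset (V ⊕ Fin 1)).card := Finset.card_union_le _ _
      _ ≤ (n - 2) + 1 := by
          simpa [hc] using Nat.add_le_add_right (Finset.card_image_le (s := D'')) 1
  have hle := domNum_le hdom
  have hge := lemOne G u v
  omega

end Main

theorem stmt13 {V : Type*} [Fintype V] (G : SimpleGraph V) (u v : V)
    (hne : u ≠ v) (h : ¬G.Adj u v) :
    domNum G - 1 ≤ domNum (pathAdd G u v 1) ∧
    domNum (pathAdd G u v 1) ≤ domNum G + 1 ∧
    (domNum (pathAdd G u v 1) = domNum G - 1 ↔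
      domNum (G.induce {w | w ≠ u ∧ w ≠ v}) = domNum G - 2) := by
  have h1 := lemOne G u v
  have h2 := lemTwo G u v
  exact ⟨by omega, h2, lemForward G u v, lemBackward G u v hne h⟩
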